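/- Let V be a finite-dimensional real inner product space, let K ⊆ V be a closed convex cone that is salient and full, and let K^∨ = {y ∈ V : ⟨y, x⟩ ≥ 0 for all x ∈ K} be its dual cone. Suppose L ⊆ V is a linear subspace such that K ∩ L spans L and K^∨ ∩ L^⊥ spans the orthogonal complement L^⊥. Then F := K ∩ L is a perfect face of K; more precisely: (a) whenever x, y ∈ K and x + y ∈ F one has x, y ∈ F (so F is a face of K); (b) the linear span of F equals L; (c) setting c = dim L^⊥, there exist y_1, …, y_c ∈ K^∨ with L = ⋂_{i=1}^{c} {x ∈ V : ⟨y_i, x⟩ = 0}; and (d) symmetrically, K^∨ ∩ L^⊥ is a perfect face of K^∨ whose linear span is L^⊥ (it is the dual face of F). -/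
import Mathlib


open RealInnerProductSpace

/-- A (convex) cone in a real vector space: a nonempty subset closed under
positive linear combinations. -/
def IsConvexCone {V : Type*} [AddCommGroup V] [Module ℝ V] (K : Set V) : Prop :=
  K.Nonempty ∧ ∀ x ∈ K, ∀ y ∈ K, ∀ a b : ℝ, 0 < a → 0 < b → a • x + b • y ∈ K

/-- `F` is a face of the cone `K`: `F ⊆ K` and whenever `x, y ∈ K` with
`x + y ∈ F`, both `x` and `y` lie in `F`. -/
def IsFaceOf {V : Type*} [AddCommGroup V] [Module ℝ V] (F K : Set V) : Prop :=
  F ⊆ K ∧ ∀ x ∈ K, ∀ y ∈ K, x + y ∈ F → x ∈ F ∧ y ∈ F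

/-- The dual cone of `K` in a real inner product space. -/
def dualConeSet {V : Type*} [NormedAddCommGroup V] [InnerProductSpace ℝ V]
    (K : Set V) : Set V :=
  {y | ∀ x ∈ K, 0 ≤ ⟪y, x⟫}

lemma existsFinSpan {V : Type*} [NormedAddCommGroup V] [InnerProductSpace ℝ V]
    [FiniteDimensional ℝ V]
    (s : Set V) (W : Submodule ℝ V) (h : Submodule.span ℝ s = W) :
    ∃ v : Fin (Module.finrank ℝ W) → V, (∀ i, v i ∈ s) ∧
      Submodule.span ℝ (Set.range v) = W := by
  obtain ⟨t, hts, hspan, hli⟩ := exists_linearIndependent ℝ s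
  rw [h] at hspan
  have htfin : t.Finite := hli.setFinite
  haveI : Fintype t := htfin.fintype
  have hcard : Fintype.card t = Module.finrank ℝ W := by
    have h1 := finrank_span_set_eq_card (s := t) hli
    rw [hspan] at h1
    rw [h1, Set.toFinset_card]
  let e : Fin (Module.finrank ℝ W) ≃ t := (Fintype.equivFinOfCardEq hcard).symm
  refine ⟨fun i => (e i : V), fun i => hts (e i).2, ?_⟩
  have hr : Set.range (fun i => (e i : V)) = t := by
    have : Set.range (fun i => (e i : V)) = Subtype.val '' Set.range e := by
      rw [← Set.range_comp]; rfl
    rw [this, e.range_eq_univ, Set.image_univ, Subtype.range_coe]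
  rw [hr, hspan]

lemma mem_orthogonal_of_span {V : Type*} [NormedAddCommGroup V] [InnerProductSpace ℝ V]
    {s : Set V} {W : Submodule ℝ V} (hspan : Submodule.span ℝ s = W)
    {x : V} (h : ∀ u ∈ s, ⟪u, x⟫ = 0) : x ∈ Wᗮ := by
  rw [← hspan, Submodule.mem_orthogonal]
  intro u hu
  induction hu using Submodule.span_induction with
  | mem u hu => exact h u hu
  | zero => simp
  | add u v _ _ hu hv => rw [inner_add_left, hu, hv, add_zero]
  | smul a u _ hu => rw [real_inner_smul_left, hu, mul_zero]
theorem statement0 {V : Type*} [NormedAddCommGroup V] [InnerProductSpace ℝ V]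
    [FiniteDimensional ℝ V]
    (K : Set V) (hK : IsConvexCone K) (hclosed : IsClosed K)
    (hsalient : ∀ x ∈ K, -x ∈ K → x = 0)
    (hfull : Submodule.span ℝ K = ⊤)
    (L : Submodule ℝ V)
    (hL : Submodule.span ℝ (K ∩ (L : Set V)) = L)
    (hLperp : Submodule.span ℝ (dualConeSet K ∩ (Lᗮ : Set V)) = Lᗮ) :
    -- (a) F := K ∩ L is a face of K
    IsFaceOf (K ∩ (L : Set V)) K ∧
    -- (b) the linear span of F equals L
    Submodule.span ℝ (K ∩ (L : Set V)) = L ∧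
    -- (c) with c = dim L^⊥, there are y_1, …, y_c ∈ K^∨ cutting out L
    (∃ y : Fin (Module.finrank ℝ Lᗮ) → V,
      (∀ i, y i ∈ dualConeSet K) ∧
      (L : Set V) = ⋂ i, {x : V | ⟪y i, x⟫ = 0}) ∧
    -- (d) symmetrically, K^∨ ∩ L^⊥ is a perfect face of K^∨ with span L^⊥
    IsFaceOf (dualConeSet K ∩ (Lᗮ : Set V)) (dualConeSet K) ∧
    Submodule.span ℝ (dualConeSet K ∩ (Lᗮ : Set V)) = Lᗮ ∧
    (∃ z : Fin (Module.finrank ℝ L) → V,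
      (∀ i, z i ∈ K) ∧
      (Lᗮ : Set V) = ⋂ i, {x : V | ⟪z i, x⟫ = 0}) := by
  -- key fact: if ⟪u,x⟫ = 0 for all u ∈ K^∨ ∩ L^⊥, then x ∈ L
  have key : ∀ x : V, (∀ u ∈ dualConeSet K ∩ (Lᗮ : Set V), ⟪u, x⟫ = 0) → x ∈ L := by
    intro x hx
    have : x ∈ Lᗮᗮ := mem_orthogonal_of_span hLperp hx
    rwa [Submodule.orthogonal_orthogonal] at this
  refine ⟨⟨Set.inter_subset_left, ?_⟩, hL, ?_, ⟨Set.inter_subset_left, ?_⟩, hLperp, ?_⟩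
  · -- (a)
    intro x hxK y hyK hxy
    have hmem : ∀ u ∈ dualConeSet K ∩ (Lᗮ : Set V), ⟪u, x⟫ = 0 ∧ ⟪u, y⟫ = 0 := by
      rintro u ⟨hu1, hu2⟩
      have h1 : 0 ≤ ⟪u, x⟫ := hu1 x hxK
      have h2 : 0 ≤ ⟪u, y⟫ := hu1 y hyK
      have h3 : ⟪u, x + y⟫ = 0 := by
        rw [real_inner_comm]
        exact hu2 (x + y) hxy.2
      rw [inner_add_right] at h3
      constructor <;> linarith
    exact ⟨⟨hxK, key x fun u hu => (hmem u hu).1⟩, ⟨hyK, key y fun u hu => (hmem u hu).2⟩⟩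
  · -- (c)
    obtain ⟨y, hy1, hy2⟩ := existsFinSpan _ Lᗮ hLperp
    refine ⟨y, fun i => (hy1 i).1, ?_⟩
    ext x
    simp only [Set.mem_iInter, Set.mem_setOf_eq, SetLike.mem_coe]
    constructor
    · intro hx i
      rw [real_inner_comm]
      exact (hy1 i).2 x hx
    · intro hx
      have : x ∈ Lᗮᗮ := mem_orthogonal_of_span hy2 (by rintro u ⟨i, rfl⟩; exact hx i)
      rwa [Submodule.orthogonal_orthogonal] at this
  · -- (d) face
    intro x hxK y hyK hxy
    have hmem : ∀ w ∈ K ∩ (L : Set V), ⟪w, x⟫ = 0 ∧ ⟪w, y⟫ = 0 := by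
      rintro w ⟨hw1, hw2⟩
      have h1 : 0 ≤ ⟪x, w⟫ := hxK w hw1
      have h2 : 0 ≤ ⟪y, w⟫ := hyK w hw1
      have h3 : ⟪w, x + y⟫ = 0 := hxy.2 w hw2
      rw [inner_add_right] at h3
      rw [real_inner_comm w x] at h1
      rw [real_inner_comm w y] at h2
      constructor <;> linarith
    exact ⟨⟨hxK, mem_orthogonal_of_span hL fun w hw => (hmem w hw).1⟩,
      ⟨hyK, mem_orthogonal_of_span hL fun w hw => (hmem w hw).2⟩⟩
  · -- (d) z family
    obtain ⟨z, hz1, hz2⟩ := existsFinSpan _ L hL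
    refine ⟨z, fun i => (hz1 i).1, ?_⟩
    ext x
    simp only [Set.mem_iInter, Set.mem_setOf_eq, SetLike.mem_coe]
    constructor
    · intro hx i
      exact hx (z i) (hz1 i).2
    · intro hx
      exact mem_orthogonal_of_span hz2 (by rintro u ⟨i, rfl⟩; exact hx i)
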